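/- For all x, y ∈ ℝ, the expectation over ω drawn from the standard normal distribution N(0,1) and φ drawn independently from the uniform distribution on [0, 2π] of the product of Random Fourier Features satisfies E_{ω,φ}[ (√2·cos(ω x + φ)) · (√2·cos(ω y + φ)) ] = exp(−(x − y)²⁄2). That is, the Random Fourier Features with Gaussian frequencies and uniform phases reproduce the Gaussian kernel in expectation. -/

import Mathlib

open MeasureTheory ProbabilityTheory Real

/-!
By the product-to-sum formula,
`2 cos(ωx + φ) cos(ωy + φ) = cos(ω(x - y)) + cos(2φ + ω(x + y))`. Averaging over a uniform
phase kills the second term, and the Gaussian average of the first is the real part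
of the characteristic function of `N(0, 1)` at `x - y`, namely `exp (-(x - y)² / 2)`.
-/

lemma integral_cos_mul_eq_re_charFun (μ : Measure ℝ) [IsFiniteMeasure μ] (t : ℝ) :
    ∫ ω, cos (ω * t) ∂μ = (charFun μ t).re := by
  have hint : Integrable (fun ω : ℝ => Complex.exp (t * ω * Complex.I)) μ :=
    Integrable.of_bound (by fun_prop) 1 (.of_forall fun ω => by
      rw [← Complex.ofReal_mul, Complex.norm_exp_ofReal_mul_I])
  rw [charFun_apply_real, ← RCLike.re_eq_complex_re, ← integral_re hint]
  congr 1 with ω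
  rw [← Complex.ofReal_mul, RCLike.re_eq_complex_re, Complex.exp_ofReal_mul_I_re, mul_comm]

lemma integral_cos_mul_gaussianReal (m : ℝ) (v : NNReal) (t : ℝ) :
    ∫ ω, cos (ω * t) ∂gaussianReal m v = cos (t * m) * exp (-(v * t ^ 2 / 2)) := by
  have hexp : (t * m * Complex.I - v * t ^ 2 / 2 : ℂ)
      = ((-(v * t ^ 2 / 2) : ℝ) : ℂ) + ((t * m : ℝ) : ℂ) * Complex.I := by push_cast; ring
  rw [integral_cos_mul_eq_re_charFun, charFun_gaussianReal, hexp, Complex.exp_add,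
    ← Complex.ofReal_exp, Complex.re_ofReal_mul, Complex.exp_ofReal_mul_I_re, mul_comm]

noncomputable def uniformPhase : Measure ℝ :=
  (ENNReal.ofReal (2 * π))⁻¹ • volume.restrict (Set.Icc 0 (2 * π))

instance : IsProbabilityMeasure uniformPhase := by
  constructor
  rw [uniformPhase, Measure.smul_apply, Measure.restrict_apply MeasurableSet.univ, Set.univ_inter,
    Real.volume_Icc, sub_zero, smul_eq_mul,
    ENNReal.inv_mul_cancel (by simp [Real.pi_pos]) ENNReal.ofReal_ne_top]

lemma integral_cos_nat_mul_add_uniformPhase {n : ℕ} (hn : n ≠ 0) (c : ℝ) :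
    ∫ φ, cos (n * φ + c) ∂uniformPhase = 0 := by
  have hn' : (n : ℝ) ≠ 0 := by exact_mod_cast hn
  rw [uniformPhase, integral_smul_measure, integral_Icc_eq_integral_Ioc,
    ← intervalIntegral.integral_of_le (by positivity),
    intervalIntegral.integral_comp_mul_add cos hn', integral_cos, mul_zero, zero_add,
    add_comm _ c, sin_add_nat_mul_two_pi, sub_self, smul_zero, smul_zero]

lemma sqrt_two_mul_cos_mul_sqrt_two_mul_cos (a b : ℝ) :
    (√2 * cos a) * (√2 * cos b) = cos (a - b) + cos (a + b) := by
  rw [← two_mul_cos_mul_cos, mul_mul_mul_comm, mul_self_sqrt zero_le_two, mul_assoc]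

lemma integral_rff_mul_rff {μ ν : Measure ℝ} [IsFiniteMeasure μ] [IsProbabilityMeasure ν]
    (hν : ∀ c, ∫ φ, cos (2 * φ + c) ∂ν = 0) (x y : ℝ) :
    ∫ p : ℝ × ℝ, (√2 * cos (p.1 * x + p.2)) * (√2 * cos (p.1 * y + p.2)) ∂μ.prod ν
      = ∫ ω, cos (ω * (x - y)) ∂μ := by
  have hint : Integrable
      (fun p : ℝ × ℝ => (√2 * cos (p.1 * x + p.2)) * (√2 * cos (p.1 * y + p.2))) (μ.prod ν) :=
    Integrable.of_bound (by fun_prop) 2 (.of_forall fun p => by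
      rw [sqrt_two_mul_cos_mul_sqrt_two_mul_cos, norm_eq_abs]
      exact (abs_add_le _ _).trans
        ((add_le_add (abs_cos_le_one _) (abs_cos_le_one _)).trans_eq one_add_one_eq_two))
  rw [integral_prod _ hint]
  congr 1 with ω
  have hsum : ∀ φ, (√2 * cos (ω * x + φ)) * (√2 * cos (ω * y + φ))
      = cos (ω * (x - y)) + cos (2 * φ + ω * (x + y)) := fun φ => by
    rw [sqrt_two_mul_cos_mul_sqrt_two_mul_cos]; ring_nf
  have hint_harmonic : Integrable (fun φ => cos (2 * φ + ω * (x + y))) ν :=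
    Integrable.of_bound (by fun_prop) 1 (.of_forall fun φ => by
      rw [norm_eq_abs]; exact abs_cos_le_one _)
  simp only [hsum]
  rw [integral_add (integrable_const _) hint_harmonic, hν, integral_const, probReal_univ,
    one_smul, add_zero]

/-- For all `x, y ∈ ℝ`, the expectation over `ω ~ N(0,1)` and `φ ~ Uniform[0, 2π]`
(independently) of the product of Random Fourier Features satisfies
`E[(√2·cos(ω x + φ)) · (√2·cos(ω y + φ))] = exp(−(x−y)²/2)`:
Random Fourier Features with Gaussian frequencies and uniform phases reproduce the
Gaussian kernel in expectation. -/
theorem rff_expectation_eq_gaussian_kernel (x y : ℝ) :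
    ∫ p : ℝ × ℝ,
        (Real.sqrt 2 * Real.cos (p.1 * x + p.2)) * (Real.sqrt 2 * Real.cos (p.1 * y + p.2))
      ∂((gaussianReal 0 1).prod
          ((ENNReal.ofReal (2 * Real.pi))⁻¹ • volume.restrict (Set.Icc 0 (2 * Real.pi))))
      = Real.exp (-(x - y) ^ 2 / 2) := by
  have hphase (c : ℝ) : ∫ φ, cos (2 * φ + c) ∂uniformPhase = 0 := by
    exact_mod_cast integral_cos_nat_mul_add_uniformPhase two_ne_zero c
  rw [← uniformPhase, integral_rff_mul_rff hphase, integral_cos_mul_gaussianReal]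
  simp only [mul_zero, cos_zero, one_mul, NNReal.coe_one, neg_div]
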